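/- arXiv:1510.07461 — 3 statements merged into one kernel-verified Lean document; each statement's English description precedes it below -/
import Mathlib

section
/- Let X be a random vector in ℝ^n with PDF f, marginal PDFs f₁,…,f_n, φ(x) = ∏ᵢ φ_i(x_i) with φ_i ≥ 0, and p > 1. If ∫_{ℝ^n} ∏ᵢ φ_i(x_i) f_i(x_i)^{p-1} [f(x) - ∏ᵢ f_i(x_i)] dx ≥ 0, then h^w_{φ,p}(f) ≤ ∑_{i=1}^n h^w_{φ_i,p}(f_i), with equality if the components X₁,…,X_n are independent (f = ∏ f_i a.e.). -/
/-!
Write `Φ x = ∏ φᵢ(xᵢ)` and `g x = ∏ fᵢ(xᵢ)`. By Fubini `∫ Φ g^p = ∏ ∫ φᵢ fᵢ^p`, so the right-hand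
side is `log (∫ Φ g^p) / (1 - p)` and, as `1 - p < 0`, it suffices to show `∫ Φ g^p ≤ ∫ Φ f^p`.
By convexity of `t ↦ t^p` we have `p g^(p-1) (f - g) ≤ f^p - g^p` pointwise; weighting by `Φ` and
integrating, the hypothesis makes the left-hand side nonnegative.
-/

open MeasureTheory

lemma Real.mul_rpow_sub_one_mul_sub_le {a b p : ℝ} (hp : 1 < p) (ha : 0 ≤ a) (hb : 0 ≤ b) :
    p * (b ^ (p - 1) * (a - b)) ≤ a ^ p - b ^ p := by
  rcases hb.eq_or_lt with rfl | hb
  · simp [Real.zero_rpow (by linarith : p - 1 ≠ 0), Real.zero_rpow (by linarith : p ≠ 0),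
      Real.rpow_nonneg ha]
  have hbern := one_add_mul_self_le_rpow_one_add (s := a / b - 1)
    (by linarith [div_nonneg ha hb.le]) hp.le
  rw [add_sub_cancel, Real.div_rpow ha hb.le, le_div_iff₀ (Real.rpow_pos_of_pos hb p)] at hbern
  have hbp : b ^ (p - 1) * b = b ^ p := by rw [Real.rpow_sub_one hb.ne', div_mul_cancel₀ _ hb.ne']
  have hexpand : (1 + p * (a / b - 1)) * b ^ p = b ^ p + p * (b ^ (p - 1) * (a - b)) := by
    rw [← hbp]; field_simp
  linarith

section Integral

variable {α : Type*} [MeasurableSpace α] {μ : Measure α} {w f g : α → ℝ} {p : ℝ}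

lemma mul_integral_rpow_sub_one_mul_sub_le (hp : 1 < p) (hw : ∀ x, 0 ≤ w x)
    (hf : ∀ x, 0 ≤ f x) (hg : ∀ x, 0 ≤ g x)
    (hmeas : AEStronglyMeasurable (fun x => w x * g x ^ (p - 1) * (f x - g x)) μ)
    (hIf : Integrable (fun x => w x * f x ^ p) μ) (hIg : Integrable (fun x => w x * g x ^ p) μ) :
    p * ∫ x, w x * g x ^ (p - 1) * (f x - g x) ∂μ
      ≤ ∫ x, w x * f x ^ p ∂μ - ∫ x, w x * g x ^ p ∂μ := by
  have hupper : ∀ x, p * (w x * g x ^ (p - 1) * (f x - g x)) ≤ w x * f x ^ p - w x * g x ^ p :=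
    fun x => calc
      _ = w x * (p * (g x ^ (p - 1) * (f x - g x))) := by ring
      _ ≤ w x * (f x ^ p - g x ^ p) :=
        mul_le_mul_of_nonneg_left (Real.mul_rpow_sub_one_mul_sub_le hp (hf x) (hg x)) (hw x)
      _ = _ := by ring
  have hlower : ∀ x, -(w x * g x ^ p) ≤ w x * g x ^ (p - 1) * (f x - g x) := fun x => by
    have hgp : g x ^ p = g x ^ (p - 1) * g x := by
      rw [Real.rpow_of_add_eq (hg x) (by linarith) (sub_add_cancel p 1), Real.rpow_one]
    have := mul_nonneg (mul_nonneg (hw x) (Real.rpow_nonneg (hg x) (p - 1))) (hf x)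
    rw [hgp]; linarith
  have hint : Integrable (fun x => w x * g x ^ (p - 1) * (f x - g x)) μ :=
    integrable_of_le_of_le hmeas (ae_of_all _ hlower)
      (ae_of_all _ fun x => (le_div_iff₀' (by linarith)).2 (hupper x))
      hIg.neg ((hIf.sub hIg).div_const p)
  calc p * ∫ x, w x * g x ^ (p - 1) * (f x - g x) ∂μ
      = ∫ x, p * (w x * g x ^ (p - 1) * (f x - g x)) ∂μ := (integral_const_mul _ _).symm
    _ ≤ ∫ x, w x * f x ^ p - w x * g x ^ p ∂μ :=
      integral_mono (hint.const_mul p) (hIf.sub hIg) hupper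
    _ = _ := integral_sub hIf hIg

lemma integral_mul_rpow_le_of_integral_nonneg (hp : 1 < p) (hw : ∀ x, 0 ≤ w x)
    (hf : ∀ x, 0 ≤ f x) (hg : ∀ x, 0 ≤ g x)
    (hmeas : AEStronglyMeasurable (fun x => w x * g x ^ (p - 1) * (f x - g x)) μ)
    (hIf : Integrable (fun x => w x * f x ^ p) μ) (hIg : Integrable (fun x => w x * g x ^ p) μ)
    (h : 0 ≤ ∫ x, w x * g x ^ (p - 1) * (f x - g x) ∂μ) :
    ∫ x, w x * g x ^ p ∂μ ≤ ∫ x, w x * f x ^ p ∂μ := by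
  have := mul_integral_rpow_sub_one_mul_sub_le hp hw hf hg hmeas hIf hIg
  nlinarith

end Integral

lemma Real.prod_mul_rpow {ι : Type*} {s : Finset ι} (a b : ι → ℝ) (hb : ∀ i ∈ s, 0 ≤ b i)
    (r : ℝ) : ∏ i ∈ s, a i * b i ^ r = (∏ i ∈ s, a i) * (∏ i ∈ s, b i) ^ r := by
  rw [Finset.prod_mul_distrib, Real.finsetProd_rpow s b hb]

section Product

variable {ι : Type*} [Fintype ι] {φ g : ι → ℝ → ℝ} {p : ℝ}

lemma integrable_prod_mul_prod_rpow (hg : ∀ i t, 0 ≤ g i t)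
    (hI : ∀ i, Integrable fun t => φ i t * g i t ^ p) :
    Integrable fun x : ι → ℝ => (∏ i, φ i (x i)) * (∏ i, g i (x i)) ^ p := by
  simp_rw [← Real.prod_mul_rpow _ _ (fun i _ => hg i _)]
  exact Integrable.fintype_prod hI

lemma integral_prod_mul_prod_rpow (hg : ∀ i t, 0 ≤ g i t) :
    ∫ x : ι → ℝ, (∏ i, φ i (x i)) * (∏ i, g i (x i)) ^ p = ∏ i, ∫ t, φ i t * g i t ^ p := by
  simp_rw [← Real.prod_mul_rpow _ _ (fun i _ => hg i _)]
  exact integral_fintype_prod_volume_eq_prod fun i t => φ i t * g i t ^ p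

end Product

theorem stmt_5_general (n : ℕ) (f : (Fin n → ℝ) → ℝ) (fm : Fin n → ℝ → ℝ)
    (φ : Fin n → ℝ → ℝ) (p : ℝ) (hp : 1 < p)
    (hf0 : ∀ x, 0 ≤ f x) (hfmeas : Measurable f)
    (hfm0 : ∀ i t, 0 ≤ fm i t) (hfmmeas : ∀ i, Measurable (fm i))
    (hφ0 : ∀ i t, 0 ≤ φ i t) (hφmeas : ∀ i, Measurable (φ i))
    (hIf : Integrable fun x : Fin n → ℝ => (∏ i, φ i (x i)) * f x ^ p)
    (hIfi : ∀ i, Integrable fun t : ℝ => φ i t * fm i t ^ p)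
    (hIfipos : ∀ i, 0 < ∫ t : ℝ, φ i t * fm i t ^ p)
    (hcond : 0 ≤ ∫ x : Fin n → ℝ,
        (∏ i, φ i (x i) * fm i (x i) ^ (p - 1)) * (f x - ∏ i, fm i (x i))) :
    (1 / (1 - p)) * Real.log (∫ x : Fin n → ℝ, (∏ i, φ i (x i)) * f x ^ p)
      ≤ (∑ i, (1 / (1 - p)) * Real.log (∫ t : ℝ, φ i t * fm i t ^ p))
    ∧ (f =ᵐ[volume] (fun x => ∏ i, fm i (x i)) →
        (1 / (1 - p)) * Real.log (∫ x : Fin n → ℝ, (∏ i, φ i (x i)) * f x ^ p)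
          = ∑ i, (1 / (1 - p)) * Real.log (∫ t : ℝ, φ i t * fm i t ^ p)) := by
  have hsum : ∑ i, (1 / (1 - p)) * Real.log (∫ t, φ i t * fm i t ^ p)
      = (1 / (1 - p)) * Real.log (∫ x : Fin n → ℝ, (∏ i, φ i (x i)) * (∏ i, fm i (x i)) ^ p) := by
    rw [← Finset.mul_sum, integral_prod_mul_prod_rpow hfm0,
      Real.log_prod fun i _ => (hIfipos i).ne']
  have hprod_pos : 0 < ∫ x : Fin n → ℝ, (∏ i, φ i (x i)) * (∏ i, fm i (x i)) ^ p := by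
    rw [integral_prod_mul_prod_rpow hfm0]
    exact Finset.prod_pos fun i _ => hIfipos i
  rw [hsum]
  refine ⟨?_, fun hfe => ?_⟩
  · simp_rw [Real.prod_mul_rpow _ _ (fun i _ => hfm0 i _)] at hcond
    have hle := integral_mul_rpow_le_of_integral_nonneg hp
      (fun x => Finset.prod_nonneg fun i _ => hφ0 i (x i)) hf0
      (fun x => Finset.prod_nonneg fun i _ => hfm0 i (x i)) (by fun_prop) hIf
      (integrable_prod_mul_prod_rpow hfm0 hIfi) hcond
    exact mul_le_mul_of_nonpos_left (Real.log_le_log hprod_pos hle)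
      (one_div_nonpos.2 (by linarith))
  · congr 2
    exact integral_congr_ae (hfe.mono fun x hx => by simp only [hx])

/-- Subadditivity of the weighted Rényi entropy over coordinates, p > 1,
with equality when the components are independent (f = ∏ fᵢ a.e.). -/
theorem stmt_5 (n : ℕ) (f : (Fin n → ℝ) → ℝ) (fm : Fin n → ℝ → ℝ)
    (φ : Fin n → ℝ → ℝ) (p : ℝ) (hp : 1 < p)
    (hf0 : ∀ x, 0 ≤ f x) (hfmeas : Measurable f) (hf1 : ∫ x, f x = 1)
    (hfm0 : ∀ i t, 0 ≤ fm i t) (hfmmeas : ∀ i, Measurable (fm i))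
    (hfm1 : ∀ i, ∫ t, fm i t = 1)
    (hmarg : ∀ i (s : Set ℝ), MeasurableSet s →
      (∫ x in {x : Fin n → ℝ | x i ∈ s}, f x) = ∫ t in s, fm i t)
    (hφ0 : ∀ i t, 0 ≤ φ i t) (hφmeas : ∀ i, Measurable (φ i))
    (hIf : Integrable fun x : Fin n → ℝ => (∏ i, φ i (x i)) * f x ^ p)
    (hIfpos : 0 < ∫ x : Fin n → ℝ, (∏ i, φ i (x i)) * f x ^ p)
    (hIfi : ∀ i, Integrable fun t : ℝ => φ i t * fm i t ^ p)
    (hIfipos : ∀ i, 0 < ∫ t : ℝ, φ i t * fm i t ^ p)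
    (hcond : 0 ≤ ∫ x : Fin n → ℝ,
        (∏ i, φ i (x i) * fm i (x i) ^ (p - 1)) * (f x - ∏ i, fm i (x i))) :
    (1 / (1 - p)) * Real.log (∫ x : Fin n → ℝ, (∏ i, φ i (x i)) * f x ^ p)
      ≤ (∑ i, (1 / (1 - p)) * Real.log (∫ t : ℝ, φ i t * fm i t ^ p))
    ∧ (f =ᵐ[volume] (fun x => ∏ i, fm i (x i)) →
        (1 / (1 - p)) * Real.log (∫ x : Fin n → ℝ, (∏ i, φ i (x i)) * f x ^ p)
          = ∑ i, (1 / (1 - p)) * Real.log (∫ t : ℝ, φ i t * fm i t ^ p)) :=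
  stmt_5_general n f fm φ p hp hf0 hfmeas hfm0 hfmmeas hφ0 hφmeas hIf hIfi hIfipos hcond
end

section
/- For μ > n/2 + 1, the weighted expectation E[ (X^T X) · log(1 + X^T X) ] where X has the n-dimensional Pearson type VII density f_{VII}(x;μ) = (Γ(μ)/(π^{n/2} Γ(μ - n/2))) (1 + x^T x)^{-μ} equals (n/(2μ - n - 2)) · (Ψ(μ) - Ψ(μ - n/2 - 1)), where Ψ is the digamma function. -/
/-!
Writing `‖x‖² = (1 + ‖x‖²) - 1` turns the expectation into the difference of the logarithmic
moments `∫ log (1 + ‖x‖²) (1 + ‖x‖²)^(-s)` at `s = μ - 1` and `s = μ`, normalised by `1 / I(μ)`,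
where `I(s) = ∫ (1 + ‖x‖²)^(-s) = π^(n/2) Γ(s - n/2) / Γ(s)` follows from polar coordinates and
the Beta integral. Each logarithmic moment is `-I'(s) = I(s) (Ψ(s) - Ψ(s - n/2))`, by
differentiating under the integral sign; the recurrences `Γ(t + 1) = t Γ(t)` and
`Ψ(t + 1) = Ψ(t) + 1/t` then collapse the difference to the stated value.
-/

open Real Set Filter Topology MeasureTheory Module

noncomputable def digamma (t : ℝ) : ℝ := deriv (fun s => Real.log (Real.Gamma s)) t

lemma hasDerivAt_log_Gamma {t : ℝ} (ht : 0 < t) :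
    HasDerivAt (fun s => log (Gamma s)) (digamma t) t :=
  ((differentiableAt_Gamma fun m => ((neg_nonpos.2 m.cast_nonneg).trans_lt ht).ne').log
    (Gamma_pos_of_pos ht).ne').hasDerivAt

lemma digamma_add_one {x : ℝ} (hx : 0 < x) : digamma (x + 1) = digamma x + x⁻¹ := by
  have hrec : (fun y => log (Gamma y) + log y) =ᶠ[𝓝 x] fun y => log (Gamma (y + 1)) := by
    filter_upwards [eventually_gt_nhds hx] with y hy
    rw [Gamma_add_one hy.ne', log_mul hy.ne' (Gamma_pos_of_pos hy).ne', add_comm]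
  exact ((hasDerivAt_log_Gamma (by linarith)).comp_add_const x 1).unique
    (((hasDerivAt_log_Gamma hx).add (hasDerivAt_log hx.ne')).congr_of_eventuallyEq hrec.symm)

lemma integral_Ioo_rpow_mul_one_sub_rpow {a b : ℝ} (ha : 0 < a) (hb : 0 < b) :
    ∫ u in Ioo (0:ℝ) 1, u ^ (a - 1) * (1 - u) ^ (b - 1) = Gamma a * Gamma b / Gamma (a + b) := by
  have h := Complex.betaIntegral_eq_Gamma_mul_div a b (by simpa) (by simpa)
  rw [← Complex.ofReal_add, Complex.Gamma_ofReal, Complex.Gamma_ofReal, Complex.Gamma_ofReal,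
    Complex.betaIntegral, intervalIntegral.integral_of_le zero_le_one,
    integral_Ioc_eq_integral_Ioo] at h
  have hre : ∫ u in Ioo (0:ℝ) 1, (u : ℂ) ^ ((a : ℂ) - 1) * (1 - (u : ℂ)) ^ ((b : ℂ) - 1)
      = ((∫ u in Ioo (0:ℝ) 1, u ^ (a - 1) * (1 - u) ^ (b - 1) : ℝ) : ℂ) := by
    rw [← integral_complex_ofReal]
    refine setIntegral_congr_fun measurableSet_Ioo fun u hu => ?_
    push_cast [Complex.ofReal_cpow hu.1.le, Complex.ofReal_cpow (sub_nonneg.2 hu.2.le)]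
    rfl
  exact_mod_cast hre ▸ h

lemma abs_deriv_mul_beta_integrand_inv_one_add_sq {a b r : ℝ} (hr : 0 < r) :
    |-(2 * r) / (1 + r ^ 2) ^ 2| * (((1 + r ^ 2)⁻¹) ^ (a - 1) * (1 - (1 + r ^ 2)⁻¹) ^ (b - 1))
      = 2 * (r ^ (2 * b - 1) * (1 + r ^ 2) ^ (-(a + b))) := by
  have hc : 0 < 1 + r ^ 2 := by positivity
  have h1 : 1 - (1 + r ^ 2)⁻¹ = r ^ 2 / (1 + r ^ 2) := by field_simp; ring
  have h2 : r ^ (2 * b - 1) = (r ^ 2) ^ (b - 1) * r := by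
    rw [← rpow_natCast, ← rpow_mul hr.le, ← rpow_add_one hr.ne']
    congr 1
    push_cast
    ring
  have h3 : (1 + r ^ 2) ^ (-(a + b))
      = ((1 + r ^ 2) ^ (a - 1) * (1 + r ^ 2) ^ (b - 1) * (1 + r ^ 2) ^ 2)⁻¹ := by
    rw [← rpow_natCast (1 + r ^ 2) 2, ← rpow_add hc, ← rpow_add hc, rpow_neg hc.le]
    congr 2
    push_cast
    ring
  rw [abs_div, abs_neg, abs_of_pos (by positivity : 0 < 2 * r),
    abs_of_pos (by positivity : 0 < (1 + r ^ 2) ^ 2), h1, h2, h3, inv_rpow hc.le,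
    div_rpow (by positivity) hc.le]
  have : 0 < (1 + r ^ 2) ^ (a - 1) := by positivity
  have : 0 < (1 + r ^ 2) ^ (b - 1) := by positivity
  field_simp

lemma integral_Ioi_rpow_mul_one_add_sq_rpow {a b : ℝ} (ha : 0 < a) (hb : 0 < b) :
    ∫ r in Ioi (0:ℝ), r ^ (2 * b - 1) * (1 + r ^ 2) ^ (-(a + b))
      = Gamma a * Gamma b / (2 * Gamma (a + b)) := by
  have hderiv : ∀ r ∈ Ioi (0:ℝ), HasDerivWithinAt (fun r => (1 + r ^ 2)⁻¹)
      (-(2 * r) / (1 + r ^ 2) ^ 2) (Ioi 0) r := fun r _ =>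
    (((hasDerivAt_pow 2 r).const_add 1).inv (by positivity)).hasDerivWithinAt.congr_deriv
      (by ring)
  have hanti : StrictAntiOn (fun r : ℝ => (1 + r ^ 2)⁻¹) (Ioi 0) := fun x hx y hy hxy => by
    have : x ^ 2 < y ^ 2 := by gcongr; exact hx.le
    dsimp only
    gcongr
  have himg : (fun r : ℝ => (1 + r ^ 2)⁻¹) '' Ioi 0 = Ioo 0 1 := by
    ext u
    constructor
    · rintro ⟨r, hr, rfl⟩
      exact ⟨by positivity, inv_lt_one_of_one_lt₀ (by nlinarith [mem_Ioi.1 hr])⟩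
    · rintro ⟨hu0, hu1⟩
      have h1 : 1 < u⁻¹ := one_lt_inv₀ hu0 |>.2 hu1
      refine ⟨√(u⁻¹ - 1), sqrt_pos.2 (by linarith), ?_⟩
      simp only [sq_sqrt (by linarith : (0:ℝ) ≤ u⁻¹ - 1), add_sub_cancel, inv_inv]
  have hchg := integral_image_eq_integral_abs_deriv_smul measurableSet_Ioi hderiv hanti.injOn
    (fun u => u ^ (a - 1) * (1 - u) ^ (b - 1))
  simp only [smul_eq_mul] at hchg
  rw [himg, integral_Ioo_rpow_mul_one_sub_rpow ha hb,
    setIntegral_congr_fun measurableSet_Ioi fun r hr =>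
      abs_deriv_mul_beta_integrand_inv_one_add_sq hr,
    integral_const_mul] at hchg
  rw [div_mul_eq_div_div_swap, hchg, mul_div_cancel_left₀ _ two_ne_zero]

theorem hasDerivAt_integral_rpow_neg {α : Type*} [MeasurableSpace α] {ν : Measure α}
    {g : α → ℝ} (hg : AEMeasurable g ν) (hg1 : ∀ x, 1 ≤ g x) {s₁ s : ℝ} (hs : s₁ < s)
    (hint : ∀ t, s₁ < t → Integrable (fun x => g x ^ (-t)) ν) :
    Integrable (fun x => log (g x) * g x ^ (-s)) ν ∧
      HasDerivAt (fun t => ∫ x, g x ^ (-t) ∂ν) (-∫ x, log (g x) * g x ^ (-s) ∂ν) s := by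
  set ε := (s - s₁) / 3 with hε
  have hε0 : 0 < ε := by linarith
  have hg0 : ∀ x, 0 < g x := fun x => one_pos.trans_le (hg1 x)
  -- `log y ≤ y ^ ε / ε` absorbs the logarithm into the margin `ε` of the exponent
  have hbound : ∀ x, ∀ t ∈ Metric.ball s ε,
      ‖-(log (g x) * g x ^ (-t))‖ ≤ ε⁻¹ * g x ^ (-(s - 2 * ε)) := by
    intro x t ht
    have ht' := abs_lt.1 (Metric.mem_ball.1 ht)
    have hlog := log_nonneg (hg1 x)
    rw [norm_neg, Real.norm_of_nonneg (mul_nonneg hlog (rpow_nonneg (hg0 x).le _))]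
    calc log (g x) * g x ^ (-t) ≤ g x ^ ε / ε * g x ^ (-(s - ε)) := by
          refine mul_le_mul (log_le_rpow_div (hg0 x).le hε0)
            (rpow_le_rpow_of_exponent_le (hg1 x) (by linarith)) (rpow_nonneg (hg0 x).le _)
            (div_nonneg (rpow_nonneg (hg0 x).le _) hε0.le)
      _ = ε⁻¹ * g x ^ (-(s - 2 * ε)) := by
          rw [div_mul_eq_mul_div, ← rpow_add (hg0 x), div_eq_inv_mul]
          congr 2
          ring
  have key := hasDerivAt_integral_of_dominated_loc_of_deriv_le (μ := ν)
    (F := fun t x => g x ^ (-t)) (F' := fun t x => -(log (g x) * g x ^ (-t)))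
    (bound := fun x => ε⁻¹ * g x ^ (-(s - 2 * ε))) (Metric.ball_mem_nhds s hε0)
    (Eventually.of_forall fun t => (hg.pow_const _).aestronglyMeasurable) (hint s hs)
    ((hg.log.mul (hg.pow_const _)).neg.aestronglyMeasurable)
    (ae_of_all _ hbound) ((hint _ (by linarith)).const_mul _)
    (ae_of_all _ fun x t _ =>
      ((hasStrictDerivAt_const_rpow (hg0 x) (-t)).hasDerivAt.comp t
        (hasDerivAt_neg t)).congr_deriv (by ring))
  rw [integral_neg] at key
  exact ⟨by simpa using key.1.neg, key.2⟩

section InnerProductSpace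

variable {E : Type*} [NormedAddCommGroup E] [InnerProductSpace ℝ E] [FiniteDimensional ℝ E]
  [MeasurableSpace E] [BorelSpace E]

theorem integrable_one_add_norm_sq_rpow_neg {s : ℝ} (hs : (finrank ℝ E : ℝ) / 2 < s) :
    Integrable (fun x : E => (1 + ‖x‖ ^ 2) ^ (-s)) := by
  simpa [neg_div] using integrable_rpow_neg_one_add_norm_sq (E := E) (μ := volume)
    (r := 2 * s) (by linarith)

theorem integral_one_add_norm_sq_rpow_neg [Nontrivial E] {s : ℝ}
    (hs : (finrank ℝ E : ℝ) / 2 < s) :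
    ∫ x : E, (1 + ‖x‖ ^ 2) ^ (-s)
      = π ^ ((finrank ℝ E : ℝ) / 2) * Gamma (s - finrank ℝ E / 2) / Gamma s := by
  have hpos : 0 < finrank ℝ E := finrank_pos
  rw [integral_fun_norm_addHaar volume (fun r => (1 + r ^ 2) ^ (-s)), measureReal_def,
    InnerProductSpace.volume_ball, ENNReal.ofReal_one, one_pow, one_mul]
  generalize finrank ℝ E = d at *
  have hd : 0 < (d : ℝ) / 2 := by positivity
  have hball : (ENNReal.ofReal (√π ^ d / Gamma (d / 2 + 1))).toReal
      = π ^ ((d : ℝ) / 2) / ((d / 2) * Gamma (d / 2)) := by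
    rw [ENNReal.toReal_ofReal (by positivity), sqrt_eq_rpow, ← rpow_natCast, ← rpow_mul pi_pos.le,
      Gamma_add_one hd.ne']
    ring_nf
  have hradial : ∫ r in Ioi (0:ℝ), r ^ (d - 1) • (1 + r ^ 2) ^ (-s)
      = Gamma (s - d / 2) * Gamma (d / 2) / (2 * Gamma s) := by
    have h := integral_Ioi_rpow_mul_one_add_sq_rpow (a := s - d / 2) (by linarith) hd
    rw [sub_add_cancel] at h
    rw [← h]
    refine setIntegral_congr_fun measurableSet_Ioi fun r hr => ?_
    rw [smul_eq_mul, ← rpow_natCast, Nat.cast_sub hpos, mul_div_cancel₀ _ two_ne_zero,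
      Nat.cast_one]
  rw [hball, hradial, nsmul_eq_mul, smul_eq_mul]
  have := (Gamma_pos_of_pos hd).ne'
  have := (Gamma_pos_of_pos (hd.trans hs)).ne'
  field_simp

theorem integral_log_one_add_norm_sq_mul_rpow_neg [Nontrivial E] {s : ℝ}
    (hs : (finrank ℝ E : ℝ) / 2 < s) :
    Integrable (fun x : E => log (1 + ‖x‖ ^ 2) * (1 + ‖x‖ ^ 2) ^ (-s)) ∧
      ∫ x : E, log (1 + ‖x‖ ^ 2) * (1 + ‖x‖ ^ 2) ^ (-s)
        = π ^ ((finrank ℝ E : ℝ) / 2) * Gamma (s - finrank ℝ E / 2) / Gamma s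
          * (digamma s - digamma (s - finrank ℝ E / 2)) := by
  set d : ℝ := (finrank ℝ E : ℝ)
  obtain ⟨hint, hderiv⟩ := hasDerivAt_integral_rpow_neg (ν := volume)
    (g := fun x : E => 1 + ‖x‖ ^ 2) (by fun_prop)
    (fun x => by simp only [le_add_iff_nonneg_right]; positivity) hs
    fun t ht => integrable_one_add_norm_sq_rpow_neg ht
  refine ⟨hint, ?_⟩
  have hI : ∀ t, d / 2 < t →
      ∫ x : E, (1 + ‖x‖ ^ 2) ^ (-t) = π ^ (d / 2) * Gamma (t - d / 2) / Gamma t :=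
    fun t ht => integral_one_add_norm_sq_rpow_neg ht
  have hd : 0 ≤ d / 2 := by positivity
  have hs0 : 0 < s - d / 2 := by linarith
  have hZ : 0 < π ^ (d / 2) * Gamma (s - d / 2) / Gamma s := by
    have := Gamma_pos_of_pos hs0
    have := Gamma_pos_of_pos (hd.trans_lt hs)
    positivity
  -- compare the logarithmic derivatives of both sides of `hI`
  have hlogI : (fun t => log (π ^ (d / 2)) + log (Gamma (t - d / 2)) - log (Gamma t))
      =ᶠ[𝓝 s] fun t => log (∫ x : E, (1 + ‖x‖ ^ 2) ^ (-t)) := by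
    filter_upwards [eventually_gt_nhds hs] with t ht
    have := Gamma_pos_of_pos (sub_pos.2 ht)
    have := Gamma_pos_of_pos (hd.trans_lt ht)
    rw [hI t ht, log_div (by positivity) (by positivity),
      log_mul (by positivity) (by positivity)]
  have h1 := ((((hasDerivAt_log_Gamma hs0).comp s ((hasDerivAt_id s).sub_const (d / 2))).const_add
    (log (π ^ (d / 2)))).sub (hasDerivAt_log_Gamma (hd.trans_lt hs))).congr_of_eventuallyEq
    hlogI.symm
  have h2 := hderiv.log (by rw [hI s hs]; exact hZ.ne')
  rw [hI s hs] at h2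
  have := h1.unique h2
  rw [mul_one, eq_div_iff hZ.ne'] at this
  linarith

theorem integral_one_add_norm_sq_rpow_neg_mul_norm_sq_mul_log [Nontrivial E] {s : ℝ}
    (hs : (finrank ℝ E : ℝ) / 2 + 1 < s) :
    ∫ x : E, (1 + ‖x‖ ^ 2) ^ (-s) * (‖x‖ ^ 2 * log (1 + ‖x‖ ^ 2))
      = π ^ ((finrank ℝ E : ℝ) / 2) * Gamma (s - finrank ℝ E / 2) / Gamma s
        * (finrank ℝ E / (2 * s - finrank ℝ E - 2)
          * (digamma s - digamma (s - finrank ℝ E / 2 - 1))) := by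
  set d : ℝ := (finrank ℝ E : ℝ)
  have hd : 0 ≤ d / 2 := by positivity
  have hs₁ : 0 < s - 1 := by linarith
  have hs₂ : 0 < s - d / 2 - 1 := by linarith
  have hsplit : ∀ x : E, (1 + ‖x‖ ^ 2) ^ (-s) * (‖x‖ ^ 2 * log (1 + ‖x‖ ^ 2))
      = log (1 + ‖x‖ ^ 2) * (1 + ‖x‖ ^ 2) ^ (-(s - 1))
        - log (1 + ‖x‖ ^ 2) * (1 + ‖x‖ ^ 2) ^ (-s) := fun x => by
    rw [show -(s - 1) = -s + 1 by ring, rpow_add (by positivity), rpow_one]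
    ring
  obtain ⟨hint₁, hval₁⟩ := integral_log_one_add_norm_sq_mul_rpow_neg (E := E) (s := s - 1)
    (by linarith)
  obtain ⟨hint₂, hval₂⟩ := integral_log_one_add_norm_sq_mul_rpow_neg (E := E) (s := s)
    (by linarith)
  have hΓ₁ : Gamma s = (s - 1) * Gamma (s - 1) := by
    rw [← Gamma_add_one hs₁.ne', sub_add_cancel]
  have hΓ₂ : Gamma (s - d / 2) = (s - d / 2 - 1) * Gamma (s - d / 2 - 1) := by
    rw [← Gamma_add_one hs₂.ne', sub_add_cancel]
  have hψ₁ : digamma s = digamma (s - 1) + (s - 1)⁻¹ := by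
    rw [← digamma_add_one hs₁, sub_add_cancel]
  have hψ₂ : digamma (s - d / 2) = digamma (s - d / 2 - 1) + (s - d / 2 - 1)⁻¹ := by
    rw [← digamma_add_one hs₂, sub_add_cancel]
  simp_rw [hsplit]
  rw [integral_sub hint₁ hint₂, hval₁, hval₂, sub_right_comm s 1, hΓ₁, hΓ₂, hψ₁, hψ₂]
  have := (Gamma_pos_of_pos hs₁).ne'
  have := (Gamma_pos_of_pos hs₂).ne'
  have : 2 * s - d - 2 ≠ 0 := by linarith
  field_simp
  ring

end InnerProductSpace

lemma integral_fun_sum_sq_eq_integral_euclideanSpace {ι F : Type*} [Fintype ι]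
    [NormedAddCommGroup F] [NormedSpace ℝ F] (f : ℝ → F) :
    ∫ x : ι → ℝ, f (∑ i, x i ^ 2) = ∫ x : EuclideanSpace ℝ ι, f (‖x‖ ^ 2) := by
  rw [← (PiLp.volume_preserving_toLp ι).integral_comp
    (MeasurableEquiv.toLp 2 _).measurableEmbedding]
  simp [EuclideanSpace.norm_sq_eq]

/-- E[(XᵀX)·log(1+XᵀX)] for the Pearson type VII density equals
(n/(2μ-n-2))·(Ψ(μ) - Ψ(μ-n/2-1)). -/
theorem stmt_6 (n : ℕ) (hn : 0 < n) (μ : ℝ) (hμ : (n : ℝ) / 2 + 1 < μ) :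
    (∫ x : Fin n → ℝ,
        (Real.Gamma μ / (Real.pi ^ ((n : ℝ) / 2) * Real.Gamma (μ - n / 2)))
          * (1 + ∑ i, x i ^ 2) ^ (-μ)
          * ((∑ i, x i ^ 2) * Real.log (1 + ∑ i, x i ^ 2)))
      = ((n : ℝ) / (2 * μ - n - 2)) * (digamma μ - digamma (μ - n / 2 - 1)) := by
  have : Nonempty (Fin n) := ⟨⟨0, hn⟩⟩
  have hdim : (finrank ℝ (EuclideanSpace ℝ (Fin n)) : ℝ) = n := by simp
  rw [integral_fun_sum_sq_eq_integral_euclideanSpace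
    fun t => Gamma μ / (π ^ ((n : ℝ) / 2) * Gamma (μ - n / 2)) * (1 + t) ^ (-μ) * (t * log (1 + t))]
  simp_rw [mul_assoc]
  rw [integral_const_mul, ← hdim, integral_one_add_norm_sq_rpow_neg_mul_norm_sq_mul_log
    (by rw [hdim]; exact hμ), hdim]
  have := (Gamma_pos_of_pos (by linarith : 0 < μ - n / 2)).ne'
  have := (Gamma_pos_of_pos (by linarith : 0 < μ)).ne'
  rw [← mul_assoc, div_mul_div_comm, mul_comm (Gamma μ), div_self (by positivity), one_mul]
end

section
/- For μ > -1, the weighted expectation E[ (X^T X) · log(1 - X^T X) ] where X has the n-dimensional Pearson type II density f_{II}(x;μ) = (Γ(n/2 + μ + 1)/(π^{n/2} Γ(μ+1))) (1 - x^T x)^μ on the unit ball equals (n/(2μ + n + 2)) · (Ψ(μ+1) - Ψ(μ + n/2 + 2)), where Ψ is the digamma function. -/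
open MeasureTheory

/-!
Integrating in polar coordinates and substituting `t = r²`, a radial integral over the unit
ball of `ℝⁿ` becomes `π^(n/2) / Γ(n/2) * ∫₀¹ t^(n/2-1) H(t) dt`. For the Pearson type II
integrand this is, up to the normalising constant, `∫₀¹ t^(a-1) (1-t)^(b-1) log(1-t) dt` with
`a = n/2 + 1`, `b = μ + 1`. Differentiating the Beta integral under the integral sign, this is
`∂B(a,b)/∂b = B(a,b) (Ψ(b) - Ψ(a+b))`.
-/

open Set Real ProbabilityTheory

lemma ofReal_rpow_mul_one_sub_rpow {a b t : ℝ} (ht : t ∈ Icc (0 : ℝ) 1) :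
    ((t ^ (a - 1) * (1 - t) ^ (b - 1) : ℝ) : ℂ)
      = (t : ℂ) ^ ((a : ℂ) - 1) * (1 - (t : ℂ)) ^ ((b : ℂ) - 1) := by
  rw [Complex.ofReal_mul, Complex.ofReal_cpow ht.1, Complex.ofReal_cpow (sub_nonneg.2 ht.2)]
  push_cast
  rfl

lemma intervalIntegrable_rpow_mul_one_sub_rpow {a b : ℝ} (ha : 0 < a) (hb : 0 < b) :
    IntervalIntegrable (fun t : ℝ => t ^ (a - 1) * (1 - t) ^ (b - 1)) volume 0 1 := by
  have hC := Complex.betaIntegral_convergent (u := a) (v := b) (by simpa) (by simpa)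
  rw [intervalIntegrable_iff_integrableOn_Ioc_of_le zero_le_one] at hC ⊢
  refine IntegrableOn.congr_fun (Integrable.re hC) (fun t ht => ?_) measurableSet_Ioc
  rw [← ofReal_rpow_mul_one_sub_rpow (Ioc_subset_Icc_self ht), RCLike.re_to_complex,
    Complex.ofReal_re]

lemma integral_rpow_mul_one_sub_rpow {a b : ℝ} (ha : 0 < a) (hb : 0 < b) :
    ∫ t in (0 : ℝ)..1, t ^ (a - 1) * (1 - t) ^ (b - 1) = beta a b := by
  rw [beta_eq_betaIntegralReal a b ha hb, Complex.betaIntegral,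
    ← intervalIntegral.integral_congr fun t ht =>
      ofReal_rpow_mul_one_sub_rpow (uIcc_of_le (zero_le_one' ℝ) ▸ ht),
    intervalIntegral.integral_ofReal, Complex.ofReal_re]

lemma hasDerivAt_Gamma_mul_digamma {t : ℝ} (ht : ∀ m : ℕ, t ≠ -m) :
    HasDerivAt Gamma (Gamma t * digamma t) t := by
  have hd := (differentiableAt_Gamma ht).hasDerivAt
  rw [digamma, (hd.log (Gamma_ne_zero ht)).deriv, mul_div_cancel₀ _ (Gamma_ne_zero ht)]
  exact hd

lemma hasDerivAt_beta_right {a b : ℝ} (ha : 0 < a) (hb : 0 < b) :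
    HasDerivAt (beta a) (beta a b * (digamma b - digamma (a + b))) b := by
  have h_ne : ∀ {s : ℝ}, 0 < s → ∀ m : ℕ, s ≠ -m := fun hs m h => by
    linarith [(m.cast_nonneg : (0 : ℝ) ≤ m)]
  have hΓab : HasDerivAt (fun x => Gamma (a + x)) (Gamma (a + b) * digamma (a + b)) b :=
    (hasDerivAt_Gamma_mul_digamma (h_ne (add_pos ha hb))).comp_const_add a b
  refine (((hasDerivAt_Gamma_mul_digamma (h_ne hb)).const_mul (Gamma a)).div hΓab
    (Gamma_pos_of_pos (add_pos ha hb)).ne').congr_deriv ?_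
  unfold beta
  field_simp

lemma abs_log_le_rpow_neg_div {s ε : ℝ} (hs₀ : 0 < s) (hs₁ : s ≤ 1) (hε : 0 < ε) :
    |log s| ≤ s ^ (-ε) / ε := by
  rw [abs_of_nonpos (log_nonpos hs₀.le hs₁), ← log_inv, rpow_neg hs₀.le,
    ← inv_rpow hs₀.le]
  exact log_le_rpow_div (inv_nonneg.2 hs₀.le) hε

lemma abs_rpow_mul_log_le {s c x : ℝ} (hs₀ : 0 < s) (hs₁ : s ≤ 1) (hc : 0 < c)
    (hcx : c ≤ x) :
    |s ^ (x - 1) * log s| ≤ 2 / c * s ^ (c / 2 - 1) := by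
  have hlog := abs_log_le_rpow_neg_div hs₀ hs₁ (half_pos hc)
  have hpow : s ^ (x - 1) ≤ s ^ (c - 1) := rpow_le_rpow_of_exponent_ge hs₀ hs₁ (by linarith)
  calc |s ^ (x - 1) * log s| = s ^ (x - 1) * |log s| := by
        rw [abs_mul, abs_of_pos (rpow_pos_of_pos hs₀ _)]
    _ ≤ s ^ (c - 1) * (s ^ (-(c / 2)) / (c / 2)) :=
        mul_le_mul hpow hlog (abs_nonneg _) (rpow_nonneg hs₀.le _)
    _ = 2 / c * s ^ (c / 2 - 1) := by
        rw [mul_div_assoc', ← rpow_add hs₀]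
        field_simp
        ring_nf

lemma hasDerivAt_integral_rpow_mul_one_sub_rpow {a b : ℝ} (ha : 0 < a) (hb : 0 < b) :
    HasDerivAt (fun x => ∫ t in (0 : ℝ)..1, t ^ (a - 1) * (1 - t) ^ (x - 1))
      (∫ t in (0 : ℝ)..1, t ^ (a - 1) * ((1 - t) ^ (b - 1) * log (1 - t))) b := by
  have hb4 : 0 < b / 4 := by positivity
  have h_mem : ∀ᵐ t : ℝ, t ∈ uIoc (0 : ℝ) 1 → 0 < t ∧ 0 < 1 - t ∧ 1 - t ≤ 1 := by
    filter_upwards [Measure.ae_ne volume (1 : ℝ)] with t ht1 ht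
    rw [uIoc_of_le zero_le_one] at ht
    exact ⟨ht.1, sub_pos.2 (lt_of_le_of_ne ht.2 ht1), by linarith [ht.1]⟩
  refine (intervalIntegral.hasDerivAt_integral_of_dominated_loc_of_deriv_le
    (F := fun x t => t ^ (a - 1) * (1 - t) ^ (x - 1))
    (F' := fun x t => t ^ (a - 1) * ((1 - t) ^ (x - 1) * log (1 - t)))
    (bound := fun t => 4 / b * (t ^ (a - 1) * (1 - t) ^ (b / 4 - 1)))
    (Metric.ball_mem_nhds b (half_pos hb)) ?_ (intervalIntegrable_rpow_mul_one_sub_rpow ha hb)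
    ?_ ?_ ((intervalIntegrable_rpow_mul_one_sub_rpow ha hb4).const_mul _) ?_).2
  · exact .of_forall fun x =>
      (by fun_prop : Measurable fun t : ℝ => t ^ (a - 1) * (1 - t) ^ (x - 1)).aestronglyMeasurable
  · exact (by fun_prop : Measurable fun t : ℝ =>
      t ^ (a - 1) * ((1 - t) ^ (b - 1) * log (1 - t))).aestronglyMeasurable
  · filter_upwards [h_mem] with t ht ht_mem x hx
    obtain ⟨ht₀, ht₁, ht₂⟩ := ht ht_mem
    have hbx : b / 2 ≤ x := by linarith [(abs_lt.1 (Metric.mem_ball.1 hx)).1]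
    have := abs_rpow_mul_log_le ht₁ ht₂ (half_pos hb) hbx
    rw [norm_mul, Real.norm_eq_abs, Real.norm_eq_abs, abs_of_pos (rpow_pos_of_pos ht₀ _)]
    calc t ^ (a - 1) * |(1 - t) ^ (x - 1) * log (1 - t)|
        ≤ t ^ (a - 1) * (2 / (b / 2) * (1 - t) ^ (b / 2 / 2 - 1)) := by gcongr
      _ = 4 / b * (t ^ (a - 1) * (1 - t) ^ (b / 4 - 1)) := by ring_nf
  · filter_upwards [h_mem] with t ht ht_mem x _
    have h := ((hasStrictDerivAt_const_rpow (ht ht_mem).2.1 (x - 1)).hasDerivAt.comp_sub_const x 1)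
    exact h.const_mul (t ^ (a - 1))

lemma integral_rpow_mul_one_sub_rpow_mul_log {a b : ℝ} (ha : 0 < a) (hb : 0 < b) :
    ∫ t in (0 : ℝ)..1, t ^ (a - 1) * ((1 - t) ^ (b - 1) * log (1 - t))
      = beta a b * (digamma b - digamma (a + b)) := by
  have h_eq : (fun x => ∫ t in (0 : ℝ)..1, t ^ (a - 1) * (1 - t) ^ (x - 1))
      =ᶠ[nhds b] beta a := by
    filter_upwards [lt_mem_nhds hb] with x hx using integral_rpow_mul_one_sub_rpow ha hx
  exact (hasDerivAt_integral_rpow_mul_one_sub_rpow ha hb).unique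
    ((hasDerivAt_beta_right ha hb).congr_of_eventuallyEq h_eq)

lemma integral_Ioi_pow_mul_indicator_comp_sq {d : ℕ} (hd : 0 < d) (H : ℝ → ℝ) :
    ∫ r in Ioi (0 : ℝ), r ^ (d - 1) • (Iic 1).indicator (fun r => H (r ^ 2)) r
      = 1 / 2 * ∫ t in (0 : ℝ)..1, t ^ ((d : ℝ) / 2 - 1) * H t := by
  set g := (Ioc (0 : ℝ) 1).indicator fun t => t ^ ((d : ℝ) / 2 - 1) * H t with hg
  have h_pt : ∀ r ∈ Ioi (0 : ℝ), (2 * r ^ ((2 : ℝ) - 1)) • g (r ^ (2 : ℝ))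
      = 2 * (r ^ (d - 1) • (Iic 1).indicator (fun r => H (r ^ 2)) r) := by
    intro r (hr : 0 < r)
    rw [rpow_two, hg]
    by_cases hr1 : r ≤ 1
    · have hmem : r ^ 2 ∈ Ioc (0 : ℝ) 1 := ⟨by positivity, pow_le_one₀ hr.le hr1⟩
      have hpow : r ^ ((2 : ℝ) - 1) * (r ^ 2) ^ ((d : ℝ) / 2 - 1) = r ^ (d - 1) := by
        rw [← rpow_natCast_mul hr.le, ← rpow_add hr, ← rpow_natCast, Nat.cast_sub hd]
        congr 1
        push_cast
        ring
      rw [indicator_of_mem hmem, indicator_of_mem (show r ∈ Iic 1 from hr1), smul_eq_mul,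
        smul_eq_mul, ← hpow]
      ring
    · have hmem : r ^ 2 ∉ Ioc (0 : ℝ) 1 := fun h => hr1 (by nlinarith [h.2])
      rw [indicator_of_notMem hmem, indicator_of_notMem (show r ∉ Iic 1 from hr1)]
      simp
  have h := integral_comp_rpow_Ioi_of_pos (g := g) two_pos
  rw [setIntegral_congr_fun measurableSet_Ioi h_pt, integral_const_mul, hg,
    setIntegral_indicator measurableSet_Ioc, inter_eq_right.2 Ioc_subset_Ioi_self,
    ← intervalIntegral.integral_of_le zero_le_one] at h
  linear_combination h / 2

open Module in
theorem integral_closedBall_comp_norm_sq {E : Type*} [NormedAddCommGroup E]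
    [InnerProductSpace ℝ E] [FiniteDimensional ℝ E] [MeasurableSpace E] [BorelSpace E]
    [Nontrivial E] (H : ℝ → ℝ) :
    ∫ x in Metric.closedBall (0 : E) 1, H (‖x‖ ^ 2)
      = π ^ ((finrank ℝ E : ℝ) / 2) / Gamma ((finrank ℝ E : ℝ) / 2)
          * ∫ t in (0 : ℝ)..1, t ^ ((finrank ℝ E : ℝ) / 2 - 1) * H t := by
  set d := finrank ℝ E with hd_def
  have hd : 0 < d := finrank_pos
  have h_ball : Metric.closedBall (0 : E) 1 = (‖·‖) ⁻¹' Iic 1 := by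
    ext x
    simp
  have h_vol : volume.real (Metric.ball (0 : E) 1) = √π ^ d / Gamma (d / 2 + 1) := by
    rw [measureReal_def, InnerProductSpace.volume_ball, ENNReal.ofReal_one, one_pow, one_mul,
      ENNReal.toReal_ofReal (by positivity)]
  have h_sqrt : √π ^ d = π ^ ((d : ℝ) / 2) := by
    rw [sqrt_eq_rpow, ← rpow_natCast, ← rpow_mul pi_pos.le]
    ring_nf
  have hd2 : (d : ℝ) / 2 ≠ 0 := by positivity
  rw [← integral_indicator measurableSet_closedBall, h_ball]
  simp_rw [← Function.comp_apply (f := fun r => H (r ^ 2)) (g := (‖·‖)),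
    indicator_comp_right]
  rw [integral_fun_norm_addHaar volume, ← hd_def, h_vol,
    integral_Ioi_pow_mul_indicator_comp_sq hd, nsmul_eq_mul, smul_eq_mul, h_sqrt, Gamma_add_one hd2]
  field_simp

theorem integral_sum_sq_le_one {n : ℕ} (hn : 0 < n) (H : ℝ → ℝ) :
    ∫ x in {x : Fin n → ℝ | ∑ i, x i ^ 2 ≤ 1}, H (∑ i, x i ^ 2)
      = π ^ ((n : ℝ) / 2) / Gamma ((n : ℝ) / 2)
          * ∫ t in (0 : ℝ)..1, t ^ ((n : ℝ) / 2 - 1) * H t := by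
  have : Nontrivial (EuclideanSpace ℝ (Fin n)) :=
    Module.nontrivial_of_finrank_pos (by rwa [finrank_euclideanSpace_fin])
  have h_sum : ∀ y : EuclideanSpace ℝ (Fin n), ∑ i, y i ^ 2 = ‖y‖ ^ 2 := fun y => by
    simp [EuclideanSpace.norm_sq_eq]
  have h_mp := EuclideanSpace.volume_preserving_symm_measurableEquiv_toLp (Fin n)
  rw [← h_mp.setIntegral_preimage_emb (MeasurableEquiv.measurableEmbedding _)]
  have h_pre : (MeasurableEquiv.toLp 2 (Fin n → ℝ)).symm ⁻¹' {x | ∑ i, x i ^ 2 ≤ 1}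
      = Metric.closedBall 0 1 := by
    ext y
    simp [h_sum]
  rw [h_pre]
  have h := integral_closedBall_comp_norm_sq (E := EuclideanSpace ℝ (Fin n)) H
  rw [finrank_euclideanSpace_fin] at h
  rw [← h]
  exact setIntegral_congr_fun measurableSet_closedBall fun y _ => congrArg H (h_sum y)

lemma integral_rpow_mul_one_sub_rpow_mul_self_mul_log {c μ : ℝ} (hc : -1 < c) (hμ : -1 < μ) :
    ∫ t in (0 : ℝ)..1, t ^ (c - 1) * ((1 - t) ^ μ * (t * log (1 - t)))
      = beta (c + 1) (μ + 1) * (digamma (μ + 1) - digamma (c + μ + 2)) := by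
  have h := integral_rpow_mul_one_sub_rpow_mul_log (a := c + 1) (b := μ + 1)
    (by linarith) (by linarith)
  rw [add_sub_cancel_right, add_sub_cancel_right, show c + 1 + (μ + 1) = c + μ + 2 by ring] at h
  rw [← h]
  refine intervalIntegral.integral_congr_ae (.of_forall fun t ht => ?_)
  have ht₀ : t ≠ 0 := (uIoc_of_le (zero_le_one' ℝ) ▸ ht).1.ne'
  rw [← sub_add_cancel c 1, rpow_add_one ht₀, add_sub_cancel_right]
  ring

lemma Gamma_div_mul_beta_add_one {c μ : ℝ} (hc : 0 < c) (hμ : -1 < μ) :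
    Gamma (c + μ + 1) / (Gamma c * Gamma (μ + 1)) * beta (c + 1) (μ + 1) = c / (c + μ + 1) := by
  have hq : 0 < c + μ + 1 := by linarith
  rw [beta, show c + 1 + (μ + 1) = c + μ + 1 + 1 by ring, Gamma_add_one hc.ne',
    Gamma_add_one hq.ne']
  have hΓc := (Gamma_pos_of_pos hc).ne'
  have hΓμ := (Gamma_pos_of_pos (show 0 < μ + 1 by linarith)).ne'
  have hΓq := (Gamma_pos_of_pos hq).ne'
  field_simp

/-- E[(XᵀX)·log(1-XᵀX)] for the Pearson type II density equals
(n/(2μ+n+2))·(Ψ(μ+1) - Ψ(μ+n/2+2)). -/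
theorem stmt_7 (n : ℕ) (hn : 0 < n) (μ : ℝ) (hμ : -1 < μ) :
    (∫ x in {x : Fin n → ℝ | ∑ i, x i ^ 2 ≤ 1},
        (Real.Gamma ((n : ℝ) / 2 + μ + 1) / (Real.pi ^ ((n : ℝ) / 2) * Real.Gamma (μ + 1)))
          * (1 - ∑ i, x i ^ 2) ^ μ
          * ((∑ i, x i ^ 2) * Real.log (1 - ∑ i, x i ^ 2)))
      = ((n : ℝ) / (2 * μ + n + 2)) * (digamma (μ + 1) - digamma (μ + n / 2 + 2)) := by
  set C := Gamma ((n : ℝ) / 2 + μ + 1) / (π ^ ((n : ℝ) / 2) * Gamma (μ + 1))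
  have hc : 0 < (n : ℝ) / 2 := by positivity
  have h_beta :
      ∫ t in (0 : ℝ)..1, t ^ ((n : ℝ) / 2 - 1) * (C * (1 - t) ^ μ * (t * log (1 - t)))
      = C * (beta ((n : ℝ) / 2 + 1) (μ + 1)
          * (digamma (μ + 1) - digamma ((n : ℝ) / 2 + μ + 2))) := by
    rw [← integral_rpow_mul_one_sub_rpow_mul_self_mul_log (by linarith) hμ,
      ← intervalIntegral.integral_const_mul]
    congr 1 with t
    ring
  have h_coef := Gamma_div_mul_beta_add_one hc hμ
  have hπ := (rpow_pos_of_pos pi_pos ((n : ℝ) / 2)).ne'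
  rw [integral_sum_sq_le_one hn (fun s => C * (1 - s) ^ μ * (s * log (1 - s))), h_beta,
    show μ + (n : ℝ) / 2 + 2 = (n : ℝ) / 2 + μ + 2 by ring]
  calc π ^ ((n : ℝ) / 2) / Gamma ((n : ℝ) / 2) * (C * (beta ((n : ℝ) / 2 + 1) (μ + 1)
        * (digamma (μ + 1) - digamma ((n : ℝ) / 2 + μ + 2))))
      = Gamma ((n : ℝ) / 2 + μ + 1) / (Gamma ((n : ℝ) / 2) * Gamma (μ + 1))
          * beta ((n : ℝ) / 2 + 1) (μ + 1)
          * (digamma (μ + 1) - digamma ((n : ℝ) / 2 + μ + 2)) := by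
        simp only [C]
        field_simp
    _ = _ := by
        rw [h_coef, div_div, show 2 * ((n : ℝ) / 2 + μ + 1) = 2 * μ + n + 2 by ring]
end
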